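/- arXiv:1207.3962 — 10 statements merged into one kernel-verified Lean document; each statement's English description precedes it below -/
import Mathlib

section
/- Let l ≤ r and let g_1, …, g_m : ℝ → ℝ be continuous on [l, r] with g_j(x) < g_{j+1}(x) for all x ∈ [l, r] and all 1 ≤ j < m. Let f : ℝ → ℝ be continuous on [l, r] and suppose for some index 1 ≤ i < m that g_i(l) < f(l) < g_{i+1}(l). If the set S = { x ∈ [l, r] : f(x) = g_j(x) for some j } is nonempty, then S has a least element x*, and moreover f(x*) = g_i(x*) or f(x*) = g_{i+1}(x*). That is, the leftmost intersection of f with the family g_1, …, g_m is attained, and it is an intersection with one of the two vertical neighbors of f at x = l. -/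
/-- Chain comparison: for `1 ≤ j < k ≤ m`, `g j x < g k x` on the slab. -/
lemma chain_lt (l r : ℝ) (m : ℕ) (g : ℕ → ℝ → ℝ)
    (hord : ∀ j, 1 ≤ j → j < m → ∀ x ∈ Set.Icc l r, g j x < g (j + 1) x)
    {j k : ℕ} (hj : 1 ≤ j) (hjk : j < k) (hk : k ≤ m)
    {x : ℝ} (hx : x ∈ Set.Icc l r) : g j x < g k x := by
  induction k with
  | zero => omega
  | succ n ih =>
    rcases Nat.lt_succ_iff_lt_or_eq.mp hjk with h | h
    · exact lt_trans (ih h (by omega)) (hord n (by omega) (by omega) x hx)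
    · subst h; exact hord j hj (by omega) x hx

/-- For a vertically ordered family `g 1 < … < g m` of continuous curves and a
continuous curve `f` entering the slab strictly between the neighbors `g i`
and `g (i+1)` at `x = l`, if `f` intersects the family at all then the
leftmost intersection point exists and is an intersection with one of the two
neighbors `g i`, `g (i+1)`. -/
theorem first_intersection_with_neighbors
    (l r : ℝ) (hlr : l ≤ r) (m : ℕ) (g : ℕ → ℝ → ℝ)
    (hg : ∀ j, 1 ≤ j → j ≤ m → ContinuousOn (g j) (Set.Icc l r))
    (hord : ∀ j, 1 ≤ j → j < m → ∀ x ∈ Set.Icc l r, g j x < g (j + 1) x)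
    (f : ℝ → ℝ) (hf : ContinuousOn f (Set.Icc l r))
    (i : ℕ) (hi1 : 1 ≤ i) (him : i < m)
    (hfl₁ : g i l < f l) (hfl₂ : f l < g (i + 1) l)
    (hS : {x | x ∈ Set.Icc l r ∧ ∃ j, 1 ≤ j ∧ j ≤ m ∧ f x = g j x}.Nonempty) :
    ∃ xs, IsLeast {x | x ∈ Set.Icc l r ∧ ∃ j, 1 ≤ j ∧ j ≤ m ∧ f x = g j x} xs ∧
      (f xs = g i xs ∨ f xs = g (i + 1) xs) := by
  set S := {x | x ∈ Set.Icc l r ∧ ∃ j, 1 ≤ j ∧ j ≤ m ∧ f x = g j x} with hSdef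
  -- S is a finite union of closed sets
  have hSeq : S = ⋃ j ∈ Finset.Icc 1 m, {x ∈ Set.Icc l r | f x = g j x} := by
    ext x
    simp only [hSdef, Set.mem_setOf_eq, Set.mem_iUnion, Finset.mem_Icc, Set.mem_sep_iff]
    constructor
    · rintro ⟨hx, j, h1, h2, h3⟩; exact ⟨j, ⟨h1, h2⟩, hx, h3⟩
    · rintro ⟨j, ⟨h1, h2⟩, hx, h3⟩; exact ⟨hx, j, h1, h2, h3⟩
  have hclosed : IsClosed S := by
    rw [hSeq]
    apply Set.Finite.isClosed_biUnion (Finset.finite_toSet _)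
    intro j hj
    simp only [Finset.coe_Icc, Set.mem_Icc] at hj
    have hcont : ContinuousOn (fun x => f x - g j x) (Set.Icc l r) :=
      hf.sub (hg j hj.1 hj.2)
    have : {x ∈ Set.Icc l r | f x = g j x}
        = Set.Icc l r ∩ (fun x => f x - g j x) ⁻¹' {0} := by
      ext x; simp [sub_eq_zero]
    rw [this]
    exact hcont.preimage_isClosed_of_isClosed isClosed_Icc isClosed_singleton
  have hcomp : IsCompact S :=
    (isCompact_Icc (a := l) (b := r)).of_isClosed_subset hclosed (fun x hx => hx.1)
  obtain ⟨xs, hxsS, hlb⟩ := hcomp.exists_isLeast hS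
  obtain ⟨hxs, j, hj1, hjm, hje⟩ := hxsS
  have hlxs : l ≤ xs := hxs.1
  -- g i xs ≤ f xs
  have h₁ : g i xs ≤ f xs := by
    by_contra h
    push_neg at h
    have hcont : ContinuousOn (fun x => f x - g i x) (Set.Icc l xs) :=
      (hf.sub (hg i hi1 him.le)).mono (Set.Icc_subset_Icc_right hxs.2)
    have h0 : (0:ℝ) ∈ Set.Icc (f xs - g i xs) (f l - g i l) :=
      ⟨by linarith, by linarith⟩
    obtain ⟨c, hc, hc0⟩ := intermediate_value_Icc' hlxs hcont h0
    have hcS : c ∈ S := ⟨⟨hc.1, hc.2.trans hxs.2⟩, i, hi1, him.le, by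
      have := hc0; dsimp at this; linarith⟩
    have : xs ≤ c := hlb hcS
    have hcxs : c = xs := le_antisymm hc.2 this
    rw [hcxs] at hc0
    dsimp at hc0; linarith
  -- f xs ≤ g (i+1) xs
  have h₂ : f xs ≤ g (i + 1) xs := by
    by_contra h
    push_neg at h
    have hcont : ContinuousOn (fun x => f x - g (i+1) x) (Set.Icc l xs) :=
      (hf.sub (hg (i+1) (by omega) him)).mono (Set.Icc_subset_Icc_right hxs.2)
    have h0 : (0:ℝ) ∈ Set.Icc (f l - g (i+1) l) (f xs - g (i+1) xs) :=
      ⟨by linarith, by linarith⟩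
    obtain ⟨c, hc, hc0⟩ := intermediate_value_Icc hlxs hcont h0
    have hcS : c ∈ S := ⟨⟨hc.1, hc.2.trans hxs.2⟩, i+1, by omega, him, by
      have := hc0; dsimp at this; linarith⟩
    have : xs ≤ c := hlb hcS
    have hcxs : c = xs := le_antisymm hc.2 this
    rw [hcxs] at hc0
    dsimp at hc0; linarith
  refine ⟨xs, ⟨⟨hxs, j, hj1, hjm, hje⟩, hlb⟩, ?_⟩
  -- j must be i or i+1
  rcases lt_trichotomy j i with hji | hji | hji
  · exfalso
    have := chain_lt l r m g hord hj1 hji him.le hxs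
    linarith [hje ▸ h₁]
  · left; rw [hji] at hje; exact hje
  · rcases Nat.lt_or_ge j (i+2) with hji2 | hji2
    · right
      have : j = i + 1 := by omega
      rw [this] at hje; exact hje
    · exfalso
      have := chain_lt l r m g hord (j := i+1) (k := j) (by omega) (by omega) hjm hxs
      linarith [hje ▸ h₂]
end

section
/- Let l ≤ r and let a, a', b : ℝ → ℝ be continuous on [l, r] with a(x) < a'(x) for all x ∈ [l, r], and with b(l) < a(l) and b(r) < a(r). Then for every y ∈ [l, r] with b(y) = a'(y) there exist z₁ ∈ (l, y) and z₂ ∈ (y, r) with b(z₁) = a(z₁) and b(z₂) = a(z₂). In particular, every intersection point of b with the higher segment a' lies strictly between the least and the greatest intersection point of b with the lower segment a (intersection intervals are nested). -/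
/-- If `a` lies strictly below `a'` on `[l, r]` and a blue curve `b` lies
below `a` at both ends of the slab, then every intersection point `y` of `b`
with the higher curve `a'` is flanked by intersection points of `b` with the
lower curve `a`: one in `(l, y)` and one in `(y, r)`.  Intersection intervals
are nested. -/
theorem intersection_intervals_nested
    (l r : ℝ) (hlr : l ≤ r) (a a' b : ℝ → ℝ)
    (ha : ContinuousOn a (Set.Icc l r))
    (ha' : ContinuousOn a' (Set.Icc l r))
    (hb : ContinuousOn b (Set.Icc l r))
    (haa' : ∀ x ∈ Set.Icc l r, a x < a' x)
    (hbl : b l < a l) (hbr : b r < a r) :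
    ∀ y ∈ Set.Icc l r, b y = a' y →
      (∃ z₁ ∈ Set.Ioo l y, b z₁ = a z₁) ∧ (∃ z₂ ∈ Set.Ioo y r, b z₂ = a z₂) := by
  intro y hy hby
  have hfy : a y < b y := hby ▸ haa' y hy
  set f : ℝ → ℝ := fun x => b x - a x with hf
  have hfc : ContinuousOn f (Set.Icc l r) := hb.sub ha
  have h1 : (0 : ℝ) ∈ Set.Ioo (f l) (f y) := ⟨by simp [hf]; linarith, by simp [hf]; linarith⟩
  have h2 : (0 : ℝ) ∈ Set.Ioo (f r) (f y) := ⟨by simp [hf]; linarith, by simp [hf]; linarith⟩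
  have hIcc1 : Set.Icc l y ⊆ Set.Icc l r := Set.Icc_subset_Icc le_rfl hy.2
  have hIcc2 : Set.Icc y r ⊆ Set.Icc l r := Set.Icc_subset_Icc hy.1 le_rfl
  constructor
  · obtain ⟨z, hz, hfz⟩ := intermediate_value_Ioo hy.1 (hfc.mono hIcc1) h1
    exact ⟨z, hz, by simpa [hf, sub_eq_zero] using hfz⟩
  · obtain ⟨z, hz, hfz⟩ := intermediate_value_Ioo' hy.2 (hfc.mono hIcc2) h2
    exact ⟨z, hz, by simpa [hf, sub_eq_zero] using hfz⟩
end

section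
/- Let l < r and let f : ℝ → ℝ be continuous on [l, r] with f(l) ≠ 0 and f(r) ≠ 0. Suppose the zero set Z = { x ∈ [l, r] : f(x) = 0 } is finite and every z ∈ Z is a sign change, i.e., there exists ε > 0 such that f(u)·f(v) < 0 for all u ∈ [max(l, z−ε), z) and all v ∈ (z, min(r, z+ε)]. Then f(l)·f(r) < 0 if and only if the number of zeros of f in [l, r] is odd. -/
open Set

lemma no_zero_same_sign {f : ℝ → ℝ} {a b : ℝ} (hab : a ≤ b)
    (hf : ContinuousOn f (Icc a b)) (h : ∀ x ∈ Icc a b, f x ≠ 0) :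
    0 < f a * f b := by
  rcases lt_trichotomy (f a) 0 with ha | ha | ha
  · rcases lt_trichotomy (f b) 0 with hb | hb | hb
    · exact mul_pos_of_neg_of_neg ha hb
    · exact absurd hb (h b ⟨hab, le_refl b⟩)
    · obtain ⟨x, hx, hfx⟩ := intermediate_value_Icc hab hf ⟨ha.le, hb.le⟩
      exact absurd hfx (h x hx)
  · exact absurd ha (h a ⟨le_refl a, hab⟩)
  · rcases lt_trichotomy (f b) 0 with hb | hb | hb
    · obtain ⟨x, hx, hfx⟩ := intermediate_value_Icc' hab hf ⟨hb.le, ha.le⟩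
      exact absurd hfx (h x hx)
    · exact absurd hb (h b ⟨hab, le_refl b⟩)
    · exact mul_pos ha hb

lemma sign_change_parity_aux (n : ℕ) :
    ∀ (l r : ℝ), l < r → ∀ f : ℝ → ℝ, ContinuousOn f (Icc l r) →
    f l ≠ 0 → f r ≠ 0 → {x ∈ Icc l r | f x = 0}.Finite →
    {x ∈ Icc l r | f x = 0}.ncard = n →
    (∀ z ∈ {x ∈ Icc l r | f x = 0}, ∃ ε > 0,
      ∀ u ∈ Ico (max l (z - ε)) z, ∀ v ∈ Ioc z (min r (z + ε)),
        f u * f v < 0) →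
    (f l * f r < 0 ↔ Odd n) := by
  induction n with
  | zero =>
    intro l r hlr f hf hfl hfr hZfin hcard _
    have hemp : {x ∈ Icc l r | f x = 0} = ∅ := (Set.ncard_eq_zero hZfin).mp hcard
    have hpos : 0 < f l * f r := by
      apply no_zero_same_sign hlr.le hf
      intro x hx hfx
      have : x ∈ ({x ∈ Icc l r | f x = 0} : Set ℝ) := ⟨hx, hfx⟩
      rw [hemp] at this; exact this
    simp [not_lt.mpr hpos.le, Nat.odd_iff]
  | succ n IH =>
    intro l r hlr f hf hfl hfr hZfin hcard hsign
    set Z := {x ∈ Icc l r | f x = 0} with hZ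
    have hZne : Z.Nonempty := Set.nonempty_of_ncard_ne_zero (by omega)
    obtain ⟨z, hzZ, hzmin⟩ := Set.exists_min_image Z id hZfin hZne
    have hlz := hzZ.1.1
    have hzr := hzZ.1.2
    have hfz := hzZ.2
    have hlz' : l < z := lt_of_le_of_ne hlz (fun h => hfl (h ▸ hfz))
    have hzr' : z < r := lt_of_le_of_ne hzr (fun h => hfr (h ▸ hfz))
    obtain ⟨ε, hε, hprop⟩ := hsign z ⟨⟨hlz, hzr⟩, hfz⟩
    -- choose v just to the right of z, below all other zeros
    set T : Set ℝ := insert r (insert (z + ε) (Z \ {z})) with hT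
    have hTfin : T.Finite := (hZfin.diff (t := {z})).insert _ |>.insert _
    have hTne : T.Nonempty := ⟨r, Set.mem_insert _ _⟩
    obtain ⟨m, hmT, hmmin⟩ := Set.exists_min_image T id hTfin hTne
    have hTgt : ∀ w ∈ T, z < w := by
      intro w hw
      rcases hw with h | h | h
      · exact h ▸ hzr'
      · exact h ▸ (by linarith)
      · exact lt_of_le_of_ne (hzmin w h.1) (fun he => h.2 he.symm)
    have hzm : z < m := hTgt m hmT
    set v : ℝ := (z + m) / 2 with hv
    have hzv : z < v := by simp only [hv]; linarith
    have hvm : v < m := by simp only [hv]; linarith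
    have hmr : m ≤ r := hmmin r (Set.mem_insert _ _)
    have hmε : m ≤ z + ε := hmmin _ (Set.mem_insert_of_mem _ (Set.mem_insert _ _))
    have hvr : v < r := lt_of_lt_of_le hvm hmr
    have hvmem : v ∈ Ioc z (min r (z + ε)) :=
      ⟨hzv, le_min (by linarith) (by linarith)⟩
    -- choose u just to the left of z
    set u : ℝ := max l (z - ε) with hu
    have hlu : l ≤ u := le_max_left _ _
    have huz : u < z := max_lt hlz' (by linarith)
    have humem : u ∈ Ico (max l (z - ε)) z := ⟨le_refl _, huz⟩
    have huv : f u * f v < 0 := hprop u humem v hvmem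
    have hfu : f u ≠ 0 := fun h => by simp [h] at huv
    have hfv : f v ≠ 0 := fun h => by simp [h] at huv
    -- f l and f u have the same sign
    have hlu2 : 0 < f l * f u := by
      apply no_zero_same_sign hlu (hf.mono (Icc_subset_Icc le_rfl (by linarith)))
      intro x ⟨hx1, hx2⟩ hfx
      have hxZ : x ∈ Z := ⟨⟨hx1, by linarith⟩, hfx⟩
      have := hzmin x hxZ
      simp only [id] at this
      linarith
    -- zeros in [v, r] are exactly Z \ {z}
    have hZ' : {x ∈ Icc v r | f x = 0} = Z \ {z} := by
      ext x
      constructor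
      · rintro ⟨⟨hx1, hx2⟩, hfx⟩
        exact ⟨⟨⟨by linarith, hx2⟩, hfx⟩, fun he => by
          rw [Set.mem_singleton_iff] at he; subst he; linarith⟩
      · rintro ⟨hxZ, hxe⟩
        have hxz : z < x := lt_of_le_of_ne (hzmin x hxZ)
          (fun he => hxe (Set.mem_singleton_iff.mpr he.symm))
        have hxm : m ≤ x := hmmin x (Set.mem_insert_of_mem _
          (Set.mem_insert_of_mem _ ⟨hxZ, hxe⟩))
        exact ⟨⟨by linarith, hxZ.1.2⟩, hxZ.2⟩
    have hcard' : {x ∈ Icc v r | f x = 0}.ncard = n := by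
      rw [hZ']
      have := Set.ncard_diff_singleton_add_one hzZ hZfin
      omega
    have hsign' : ∀ z' ∈ {x ∈ Icc v r | f x = 0}, ∃ ε' > 0,
        ∀ u' ∈ Ico (max v (z' - ε')) z', ∀ v' ∈ Ioc z' (min r (z' + ε')),
          f u' * f v' < 0 := by
      intro z' hz'
      have hz'Z : z' ∈ Z := (hZ' ▸ hz').1
      obtain ⟨ε', hε', hp⟩ := hsign z' hz'Z
      refine ⟨ε', hε', fun u' hu' v' hv' => hp u' ⟨?_, hu'.2⟩ v' hv'⟩
      exact le_trans (max_le_max (by linarith) le_rfl) hu'.1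
    have IHres := IH v r hvr f (hf.mono (Icc_subset_Icc (by linarith) le_rfl))
      hfv hfr (hZ' ▸ (hZfin.diff (t := {z}))) hcard' hsign'
    rw [Nat.odd_add_one, ← IHres]
    -- sign bookkeeping: f l and f v have opposite signs
    have hlv : f l * f v < 0 := by
      rcases hfu.lt_or_gt with h2 | h2
      · have hl2 : f l < 0 := by nlinarith
        have hv2 : 0 < f v := by nlinarith
        exact mul_neg_of_neg_of_pos hl2 hv2
      · have hl2 : 0 < f l := by nlinarith
        have hv2 : f v < 0 := by nlinarith
        exact mul_neg_of_pos_of_neg hl2 hv2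
    have hlr0 : f l * f r ≠ 0 := mul_ne_zero hfl hfr
    constructor
    · intro h h'
      nlinarith [mul_pos_of_neg_of_neg h h', sq_nonneg (f r)]
    · intro h
      rcases lt_or_gt_of_ne hlr0 with h' | h'
      · exact h'
      · have hvrneg : f v * f r < 0 := by
          nlinarith [mul_neg_of_pos_of_neg h' hlv, sq_nonneg (f l)]
        exact absurd hvrneg h

/-- Parity lemma for transversal crossings: if a continuous function on
`[l, r]` is nonzero at both endpoints, has finitely many zeros, and every zero
is a sign change, then the function has different signs at the endpoints if
and only if the number of zeros is odd. -/
theorem sign_change_parity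
    (l r : ℝ) (hlr : l < r) (f : ℝ → ℝ)
    (hf : ContinuousOn f (Set.Icc l r))
    (hfl : f l ≠ 0) (hfr : f r ≠ 0)
    (hZfin : {x ∈ Set.Icc l r | f x = 0}.Finite)
    (hsign : ∀ z ∈ {x ∈ Set.Icc l r | f x = 0}, ∃ ε > 0,
      ∀ u ∈ Set.Ico (max l (z - ε)) z, ∀ v ∈ Set.Ioc z (min r (z + ε)),
        f u * f v < 0) :
    (f l * f r < 0 ↔ Odd {x ∈ Set.Icc l r | f x = 0}.ncard) :=
  sign_change_parity_aux _ l r hlr f hf hfl hfr hZfin rfl hsign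
end

section
/- Let l < r and let a, b₁, b₂ : ℝ → ℝ be continuous on [l, r] with b₁(x) < b₂(x) for all x ∈ [l, r]. Suppose for i = 1, 2 that b_i − a has exactly one zero x_i, that x_i ∈ (l, r), and that (b_i − a)(l)·(b_i − a)(r) < 0. Then (b₁ − a)(l) and (b₂ − a)(l) have the same sign; moreover, if b₁(l) < a(l) (both cross a upward) then x₂ < x₁, and if b₁(l) > a(l) (both cross a downward) then x₁ < x₂. -/
/-- Two pointwise ordered blue curves `b₁ < b₂` each crossing a red curve `a`
exactly once, transversally (different signs of `bᵢ - a` at the two endpoints),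
enter the slab on the same side of `a`; if they cross `a` upward
(`b₁ l < a l`) then `x₂ < x₁`, and if they cross downward (`a l < b₁ l`) then
`x₁ < x₂`. -/
theorem crossing_direction_dichotomy
    (l r : ℝ) (hlr : l < r) (a b₁ b₂ : ℝ → ℝ)
    (ha : ContinuousOn a (Set.Icc l r))
    (hb₁ : ContinuousOn b₁ (Set.Icc l r))
    (hb₂ : ContinuousOn b₂ (Set.Icc l r))
    (hord : ∀ x ∈ Set.Icc l r, b₁ x < b₂ x)
    (x₁ x₂ : ℝ) (hx₁ : x₁ ∈ Set.Ioo l r) (hx₂ : x₂ ∈ Set.Ioo l r)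
    (hz₁ : ∀ x ∈ Set.Icc l r, (b₁ x - a x = 0 ↔ x = x₁))
    (hz₂ : ∀ x ∈ Set.Icc l r, (b₂ x - a x = 0 ↔ x = x₂))
    (hs₁ : (b₁ l - a l) * (b₁ r - a r) < 0)
    (hs₂ : (b₂ l - a l) * (b₂ r - a r) < 0) :
    0 < (b₁ l - a l) * (b₂ l - a l) ∧
      (b₁ l < a l → x₂ < x₁) ∧ (a l < b₁ l → x₁ < x₂) := by

  have hlm : l ∈ Set.Icc l r := ⟨le_refl l, hlr.le⟩
  have hrm : r ∈ Set.Icc l r := ⟨hlr.le, le_refl r⟩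
  have hf : ContinuousOn (fun x => b₁ x - a x) (Set.Icc l r) := hb₁.sub ha
  have hg : ContinuousOn (fun x => b₂ x - a x) (Set.Icc l r) := hb₂.sub ha
  have hfl : b₁ l - a l ≠ 0 := fun h => hx₁.1.ne' (((hz₁ l hlm).mp h) ▸ rfl) |>.elim
  have hgl : b₂ l - a l ≠ 0 := fun h => hx₂.1.ne' (((hz₂ l hlm).mp h) ▸ rfl) |>.elim
  -- same sign at l
  have hsame : 0 < (b₁ l - a l) * (b₂ l - a l) := by
    rcases lt_or_gt_of_ne hfl with h1 | h1
    · -- f(l) < 0; show g(l) < 0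
      rcases lt_or_gt_of_ne hgl with h2 | h2
      · exact mul_pos_of_neg_of_neg h1 h2
      · exfalso
        have hfr : 0 < b₁ r - a r := by
          by_contra hc
          push_neg at hc
          nlinarith
        have hgr : b₂ r - a r < 0 := by
          by_contra hc
          push_neg at hc
          nlinarith
        have := hord r hrm
        linarith
    · have h2 : 0 < b₂ l - a l := by
        have := hord l hlm
        linarith
      exact mul_pos h1 h2
  refine ⟨hsame, ?_, ?_⟩
  · -- upward: b₁ l < a l
    intro hup
    have hfl' : b₁ l - a l < 0 := by linarith
    have hgl' : b₂ l - a l < 0 := by nlinarith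
    have hx₁m : x₁ ∈ Set.Icc l r := Set.Ioo_subset_Icc_self hx₁
    have hfx₁ : b₁ x₁ - a x₁ = 0 := (hz₁ x₁ hx₁m).mpr rfl
    have hgx₁ : 0 < b₂ x₁ - a x₁ := by
      have := hord x₁ hx₁m
      linarith
    have hsub : Set.Icc l x₁ ⊆ Set.Icc l r :=
      Set.Icc_subset_Icc le_rfl hx₁m.2
    have hIVT := intermediate_value_Icc hx₁m.1 (hg.mono hsub)
    have h0 : (0:ℝ) ∈ Set.Icc (b₂ l - a l) (b₂ x₁ - a x₁) := ⟨hgl'.le, hgx₁.le⟩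
    obtain ⟨c, hc, hc0⟩ := hIVT h0
    have hcx : c = x₂ := (hz₂ c (hsub hc)).mp hc0
    have : x₂ ≤ x₁ := hcx ▸ hc.2
    rcases lt_or_eq_of_le this with h | h
    · exact h
    · exact absurd ((hz₂ x₁ hx₁m).mpr h.symm) (by linarith)
  · intro hdown
    have hfl' : 0 < b₁ l - a l := by linarith
    have hx₂m : x₂ ∈ Set.Icc l r := Set.Ioo_subset_Icc_self hx₂
    have hgx₂ : b₂ x₂ - a x₂ = 0 := (hz₂ x₂ hx₂m).mpr rfl
    have hfx₂ : b₁ x₂ - a x₂ < 0 := by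
      have := hord x₂ hx₂m
      linarith
    have hsub : Set.Icc l x₂ ⊆ Set.Icc l r :=
      Set.Icc_subset_Icc le_rfl hx₂m.2
    have hIVT := intermediate_value_Icc' hx₂m.1 (hf.mono hsub)
    have h0 : (0:ℝ) ∈ Set.Icc (b₁ x₂ - a x₂) (b₁ l - a l) := ⟨hfx₂.le, hfl'.le⟩
    obtain ⟨c, hc, hc0⟩ := hIVT h0
    have hcx : c = x₁ := (hz₁ c (hsub hc)).mp hc0
    have : x₁ ≤ x₂ := hcx ▸ hc.2
    rcases lt_or_eq_of_le this with h | h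
    · exact h
    · exact absurd ((hz₁ x₂ hx₂m).mpr h.symm) (by linarith)
end

section
/- Let l < r and let a, a', b₁, b₂ : ℝ → ℝ be continuous on [l, r] with a(x) < a'(x) and b₁(x) < b₂(x) for all x ∈ [l, r]. Suppose that for every pair (i, c) with i ∈ {1,2} and c ∈ {a, a'}, the function b_i − c has exactly one zero, this zero lies in (l, r), and (b_i − c)(l)·(b_i − c)(r) < 0. Let x_i denote the zero of b_i − a and x'_i the zero of b_i − a'. Then x₁ < x₂ if and only if x'₁ < x'₂. (The x-order of the intersection points of two non-intersecting blue segments is the same on every red segment that both cross once transversally.) -/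
/-- If a continuous function on `[l,r]` with unique zero `x₀` has opposite
signs at `u ≤ v`, then `u ≤ x₀ ≤ v`. -/
lemma cross_mem_aux {l r x₀ u v : ℝ} {f : ℝ → ℝ}
    (hf : ContinuousOn f (Set.Icc l r))
    (hz : ∀ x ∈ Set.Icc l r, (f x = 0 ↔ x = x₀))
    (hu : u ∈ Set.Icc l r) (hv : v ∈ Set.Icc l r) (huv : u ≤ v)
    (hprod : f u * f v < 0) : u ≤ x₀ ∧ x₀ ≤ v := by
  have hsub : Set.Icc u v ⊆ Set.Icc l r := Set.Icc_subset_Icc hu.1 hv.2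
  have h0 : (0 : ℝ) ∈ Set.uIcc (f u) (f v) := by
    rcases mul_neg_iff.mp hprod with ⟨h1, h2⟩ | ⟨h1, h2⟩
    · exact Set.mem_uIcc.mpr (Or.inr ⟨h2.le, h1.le⟩)
    · exact Set.mem_uIcc.mpr (Or.inl ⟨h1.le, h2.le⟩)
  have hsub' : Set.uIcc u v ⊆ Set.Icc l r := by
    rw [Set.uIcc_of_le huv]; exact hsub
  obtain ⟨c, hc, hc0⟩ := intermediate_value_uIcc (hf.mono hsub') h0
  rw [Set.uIcc_of_le huv] at hc
  have hcx : c = x₀ := (hz c (hsub hc)).mp hc0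
  exact ⟨hcx ▸ hc.1, hcx ▸ hc.2⟩

/-- The x-order of the intersection points of two non-intersecting blue
curves is the same on every red curve that both cross exactly once,
transversally: `x₁ < x₂` on the red curve `a` iff `x'₁ < x'₂` on the red
curve `a'`. -/
theorem same_x_order_on_all_reds
    (l r : ℝ) (hlr : l < r) (a a' b₁ b₂ : ℝ → ℝ)
    (ha : ContinuousOn a (Set.Icc l r))
    (ha' : ContinuousOn a' (Set.Icc l r))
    (hb₁ : ContinuousOn b₁ (Set.Icc l r))
    (hb₂ : ContinuousOn b₂ (Set.Icc l r))
    (haa' : ∀ x ∈ Set.Icc l r, a x < a' x)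
    (hbb : ∀ x ∈ Set.Icc l r, b₁ x < b₂ x)
    (x₁ x₂ x'₁ x'₂ : ℝ)
    (hx₁ : x₁ ∈ Set.Ioo l r) (hx₂ : x₂ ∈ Set.Ioo l r)
    (hx'₁ : x'₁ ∈ Set.Ioo l r) (hx'₂ : x'₂ ∈ Set.Ioo l r)
    (hz₁ : ∀ x ∈ Set.Icc l r, (b₁ x - a x = 0 ↔ x = x₁))
    (hz₂ : ∀ x ∈ Set.Icc l r, (b₂ x - a x = 0 ↔ x = x₂))
    (hz'₁ : ∀ x ∈ Set.Icc l r, (b₁ x - a' x = 0 ↔ x = x'₁))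
    (hz'₂ : ∀ x ∈ Set.Icc l r, (b₂ x - a' x = 0 ↔ x = x'₂))
    (hs₁ : (b₁ l - a l) * (b₁ r - a r) < 0)
    (hs₂ : (b₂ l - a l) * (b₂ r - a r) < 0)
    (hs'₁ : (b₁ l - a' l) * (b₁ r - a' r) < 0)
    (hs'₂ : (b₂ l - a' l) * (b₂ r - a' r) < 0) :
    (x₁ < x₂ ↔ x'₁ < x'₂) := by
  have hl : l ∈ Set.Icc l r := ⟨le_refl l, hlr.le⟩
  have hr : r ∈ Set.Icc l r := ⟨hlr.le, le_refl r⟩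
  have hf₁ : ContinuousOn (fun x => b₁ x - a x) (Set.Icc l r) := hb₁.sub ha
  have hf₂ : ContinuousOn (fun x => b₂ x - a x) (Set.Icc l r) := hb₂.sub ha
  have hf'₁ : ContinuousOn (fun x => b₁ x - a' x) (Set.Icc l r) := hb₁.sub ha'
  have hf'₂ : ContinuousOn (fun x => b₂ x - a' x) (Set.Icc l r) := hb₂.sub ha'
  have hne : b₁ l - a l ≠ 0 := by
    intro h; rw [h, zero_mul] at hs₁; exact lt_irrefl 0 hs₁
  rcases hne.lt_or_gt with hneg | hpos
  · -- b₁ below a at l; show b₂ below a at l too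
    have h2l : b₂ l - a l < 0 := by
      by_contra h
      push_neg at h
      have h2l' : 0 < b₂ l - a l := lt_of_le_of_ne h (by
        intro h'; rw [← h', zero_mul] at hs₂; exact lt_irrefl 0 hs₂)
      have h2r : b₂ r - a r < 0 := by nlinarith
      have h1r : 0 < b₁ r - a r := by nlinarith
      have := hbb r hr
      linarith
    have h1r : 0 < b₁ r - a r := by nlinarith
    have h2r : 0 < b₂ r - a r := by nlinarith
    -- signs for a'
    have h'2l : b₂ l - a' l < 0 := by have := haa' l hl; linarith
    have h'2r : 0 < b₂ r - a' r := by nlinarith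
    have h'1l : b₁ l - a' l < 0 := by have := hbb l hl; linarith
    have h'1r : 0 < b₁ r - a' r := by nlinarith
    -- x₂ < x₁ : f₂(x₁) > 0, f₂(l) < 0
    have hmem₁ : x₁ ∈ Set.Icc l r := Set.Ioo_subset_Icc_self hx₁
    have hmem'₁ : x'₁ ∈ Set.Icc l r := Set.Ioo_subset_Icc_self hx'₁
    have hf₂x₁ : 0 < b₂ x₁ - a x₁ := by
      have h1 : b₁ x₁ - a x₁ = 0 := (hz₁ x₁ hmem₁).mpr rfl
      have := hbb x₁ hmem₁; linarith
    have h21 : x₂ ≤ x₁ :=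
      (cross_mem_aux hf₂ hz₂ hl hmem₁ hmem₁.1
        (mul_neg_of_neg_of_pos h2l hf₂x₁)).2
    have hne21 : x₂ ≠ x₁ := by
      intro h; rw [← h] at hf₂x₁
      have := (hz₂ x₂ (h ▸ hmem₁)).mpr rfl
      linarith
    have hf'₂x'₁ : 0 < b₂ x'₁ - a' x'₁ := by
      have h1 : b₁ x'₁ - a' x'₁ = 0 := (hz'₁ x'₁ hmem'₁).mpr rfl
      have := hbb x'₁ hmem'₁; linarith
    have h21' : x'₂ ≤ x'₁ :=
      (cross_mem_aux hf'₂ hz'₂ hl hmem'₁ hmem'₁.1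
        (mul_neg_of_neg_of_pos h'2l hf'₂x'₁)).2
    have hne21' : x'₂ ≠ x'₁ := by
      intro h; rw [← h] at hf'₂x'₁
      have := (hz'₂ x'₂ (h ▸ hmem'₁)).mpr rfl
      linarith
    constructor
    · intro h; exact absurd h (not_lt.mpr h21)
    · intro h; exact absurd h (not_lt.mpr h21')
  · -- b₁ above a at l
    have h1r : b₁ r - a r < 0 := by nlinarith
    have h2l : 0 < b₂ l - a l := by have := hbb l hl; linarith
    have h2r : b₂ r - a r < 0 := by nlinarith
    have h'1r : b₁ r - a' r < 0 := by have := haa' r hr; linarith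
    have h'1l : 0 < b₁ l - a' l := by nlinarith
    have h'2r : b₂ r - a' r < 0 := by have := haa' r hr; linarith
    have h'2l : 0 < b₂ l - a' l := by nlinarith
    -- x₁ < x₂ : f₁(x₂) < 0, f₁(l) > 0
    have hmem₂ : x₂ ∈ Set.Icc l r := Set.Ioo_subset_Icc_self hx₂
    have hmem'₂ : x'₂ ∈ Set.Icc l r := Set.Ioo_subset_Icc_self hx'₂
    have hf₁x₂ : b₁ x₂ - a x₂ < 0 := by
      have h2 : b₂ x₂ - a x₂ = 0 := (hz₂ x₂ hmem₂).mpr rfl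
      have := hbb x₂ hmem₂; linarith
    have h12 : x₁ ≤ x₂ :=
      (cross_mem_aux hf₁ hz₁ hl hmem₂ hmem₂.1
        (mul_neg_of_pos_of_neg hpos hf₁x₂)).2
    have hne12 : x₁ ≠ x₂ := by
      intro h; rw [← h] at hf₁x₂
      have := (hz₁ x₁ (h ▸ hmem₂)).mpr rfl
      linarith
    have hf'₁x'₂ : b₁ x'₂ - a' x'₂ < 0 := by
      have h2 : b₂ x'₂ - a' x'₂ = 0 := (hz'₂ x'₂ hmem'₂).mpr rfl
      have := hbb x'₂ hmem'₂; linarith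
    have h12' : x'₁ ≤ x'₂ :=
      (cross_mem_aux hf'₁ hz'₁ hl hmem'₂ hmem'₂.1
        (mul_neg_of_pos_of_neg h'1l hf'₁x'₂)).2
    have hne12' : x'₁ ≠ x'₂ := by
      intro h; rw [← h] at hf'₁x'₂
      have := (hz'₁ x'₁ (h ▸ hmem'₂)).mpr rfl
      linarith
    exact ⟨fun _ => lt_of_le_of_ne h12' hne12',
           fun _ => lt_of_le_of_ne h12 hne12⟩
end

section
/- Let l < r and let a, a' : ℝ → ℝ be continuous on [l, r] with a(x) < a'(x) for all x ∈ [l, r], and let b₁, …, b_n : ℝ → ℝ (n ≥ 1) be continuous on [l, r] with b_i(x) ≠ b_j(x) for all x and all i ≠ j. Suppose that for every i and every c ∈ {a, a'}, the function b_i − c has exactly one zero, lying in (l, r), and (b_i − c)(l)·(b_i − c)(r) < 0. Let x_i be the zero of b_i − a and x'_i the zero of b_i − a'. Then for every index i: x_i = min{x_1, …, x_n} if and only if x'_i = min{x'_1, …, x'_n}. (The same blue segment realizes the leftmost intersection on both red segments.) -/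
/-- If a continuous function on `[l,r]` has its unique zero `y0` outside `[u,v] ⊆ [l,r]`,
then it has the same strict sign at `u` and `v`. -/
lemma aux_same_sign {l r : ℝ} (f : ℝ → ℝ) (hf : ContinuousOn f (Set.Icc l r))
    {y0 : ℝ} (hz : ∀ y ∈ Set.Icc l r, f y = 0 ↔ y = y0)
    {u v : ℝ} (hu : u ∈ Set.Icc l r) (hv : v ∈ Set.Icc l r) (huv : u ≤ v)
    (hy : y0 ∉ Set.Icc u v) : 0 < f u * f v := by
  have hsub : Set.Icc u v ⊆ Set.Icc l r := Set.Icc_subset_Icc hu.1 hv.2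
  have key : ∀ s ∈ Set.Icc u v, f s ≠ 0 := by
    intro s hs h
    have : s = y0 := (hz s (hsub hs)).1 h
    exact hy (this ▸ hs)
  have hfu : f u ≠ 0 := key u (Set.left_mem_Icc.2 huv)
  have hfv : f v ≠ 0 := key v (Set.right_mem_Icc.2 huv)
  rcases lt_or_gt_of_ne hfu with h1 | h1 <;> rcases lt_or_gt_of_ne hfv with h2 | h2
  · exact mul_pos_of_neg_of_neg h1 h2
  · obtain ⟨s, hs, hfs⟩ := intermediate_value_Icc huv (hf.mono hsub) ⟨h1.le, h2.le⟩
    exact absurd hfs (key s hs)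
  · obtain ⟨s, hs, hfs⟩ := intermediate_value_Icc' huv (hf.mono hsub) ⟨h2.le, h1.le⟩
    exact absurd hfs (key s hs)
  · exact mul_pos h1 h2

/-- If `f` is continuous on `[l,r]` with unique zero `y0`, `f r > 0`, and `f t < 0`,
then `t < y0`. -/
lemma aux_lt_of_neg {l r : ℝ} (f : ℝ → ℝ) (hf : ContinuousOn f (Set.Icc l r))
    {y0 : ℝ} (hz : ∀ y ∈ Set.Icc l r, f y = 0 ↔ y = y0)
    (hfr : 0 < f r) {t : ℝ} (ht : t ∈ Set.Icc l r) (hft : f t < 0) : t < y0 := by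
  by_contra hco
  push_neg at hco
  have hty : t ≠ y0 := by
    intro h
    rw [← (hz t ht).2 h] at hft
    exact absurd hft (by simp)
  have hlt : y0 < t := lt_of_le_of_ne hco (Ne.symm hty)
  have hr : r ∈ Set.Icc l r := Set.right_mem_Icc.2 (le_trans ht.1 ht.2)
  have := aux_same_sign f hf hz ht hr ht.2 (by
    intro hmem
    exact absurd hmem.1 (not_le.2 hlt))
  nlinarith

/-- If `f` is continuous on `[l,r]` with unique zero `y0`, `f r < 0`, and `f t > 0`,
then `t < y0`. -/
lemma aux_lt_of_pos {l r : ℝ} (f : ℝ → ℝ) (hf : ContinuousOn f (Set.Icc l r))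
    {y0 : ℝ} (hz : ∀ y ∈ Set.Icc l r, f y = 0 ↔ y = y0)
    (hfr : f r < 0) {t : ℝ} (ht : t ∈ Set.Icc l r) (hft : 0 < f t) : t < y0 := by
  have := aux_lt_of_neg (fun y => -(f y)) (hf.neg) (y0 := y0)
    (by intro y hy; rw [neg_eq_zero]; exact hz y hy)
    (by simpa using hfr) ht (by simpa using hft)
  exact this

/-- Among pairwise non-intersecting blue curves each crossing two
non-intersecting red curves `a < a'` exactly once, transversally, the same
blue curve realizes the leftmost intersection on both red curves: `x i` is
minimal among the `x j` iff `x' i` is minimal among the `x' j`. -/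
theorem same_blue_realizes_leftmost
    (l r : ℝ) (hlr : l < r) (n : ℕ) (hn : 1 ≤ n)
    (a a' : ℝ → ℝ)
    (ha : ContinuousOn a (Set.Icc l r))
    (ha' : ContinuousOn a' (Set.Icc l r))
    (haa' : ∀ x ∈ Set.Icc l r, a x < a' x)
    (b : Fin n → ℝ → ℝ)
    (hb : ∀ i, ContinuousOn (b i) (Set.Icc l r))
    (hne : ∀ x ∈ Set.Icc l r, ∀ i j : Fin n, i ≠ j → b i x ≠ b j x)
    (x x' : Fin n → ℝ)
    (hx : ∀ i, x i ∈ Set.Ioo l r) (hx' : ∀ i, x' i ∈ Set.Ioo l r)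
    (hz : ∀ i, ∀ y ∈ Set.Icc l r, (b i y - a y = 0 ↔ y = x i))
    (hz' : ∀ i, ∀ y ∈ Set.Icc l r, (b i y - a' y = 0 ↔ y = x' i))
    (hs : ∀ i, (b i l - a l) * (b i r - a r) < 0)
    (hs' : ∀ i, (b i l - a' l) * (b i r - a' r) < 0) :
    ∀ i : Fin n, ((∀ j, x i ≤ x j) ↔ (∀ j, x' i ≤ x' j)) := by
  have hl : l ∈ Set.Icc l r := Set.left_mem_Icc.2 hlr.le
  have hr : r ∈ Set.Icc l r := Set.right_mem_Icc.2 hlr.le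
  have hxm : ∀ i, x i ∈ Set.Icc l r := fun i => Set.Ioo_subset_Icc_self (hx i)
  have hxm' : ∀ i, x' i ∈ Set.Icc l r := fun i => Set.Ioo_subset_Icc_self (hx' i)
  have hbza : ∀ i, b i (x i) - a (x i) = 0 := fun i => (hz i (x i) (hxm i)).2 rfl
  have hbza' : ∀ i, b i (x' i) - a' (x' i) = 0 := fun i => (hz' i (x' i) (hxm' i)).2 rfl
  -- sign classification: each blue curve is either "down" (above both at l, below at r)
  -- or "up" (below both at l, above at r), consistently for both red curves.
  have htype : ∀ i : Fin n,
      (0 < b i l - a l ∧ b i r - a r < 0 ∧ 0 < b i l - a' l ∧ b i r - a' r < 0) ∨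
      (b i l - a l < 0 ∧ 0 < b i r - a r ∧ b i l - a' l < 0 ∧ 0 < b i r - a' r) := by
    intro i
    have h1 := mul_neg_iff.1 (hs i)
    have h2 := mul_neg_iff.1 (hs' i)
    have hal := haa' l hl
    have har := haa' r hr
    rcases h1 with ⟨p1, q1⟩ | ⟨p1, q1⟩
    · left
      rcases h2 with ⟨p2, q2⟩ | ⟨p2, q2⟩
      · exact ⟨p1, q1, p2, q2⟩
      · nlinarith
    · right
      rcases h2 with ⟨p2, q2⟩ | ⟨p2, q2⟩
      · nlinarith
      · exact ⟨p1, q1, p2, q2⟩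
  -- pairwise ordering of blue curves
  have horder : ∀ i j : Fin n, i ≠ j →
      (∀ t ∈ Set.Icc l r, b i t < b j t) ∨ (∀ t ∈ Set.Icc l r, b j t < b i t) := by
    intro i j hij
    have hg : ContinuousOn (fun t => b i t - b j t) (Set.Icc l r) := (hb i).sub (hb j)
    have hgl : b i l - b j l ≠ 0 := sub_ne_zero.2 (hne l hl i j hij)
    rcases lt_or_gt_of_ne hgl with h | h
    · left
      intro t ht
      by_contra hcon
      push_neg at hcon
      have hgt : 0 < b i t - b j t := by
        have : b i t ≠ b j t := hne t ht i j hij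
        cases lt_or_gt_of_ne this with
        | inl hh => linarith
        | inr hh => linarith
      obtain ⟨s, hs1, hs2⟩ := intermediate_value_Icc ht.1
        (hg.mono (Set.Icc_subset_Icc le_rfl ht.2)) ⟨h.le, hgt.le⟩
      have hsmem : s ∈ Set.Icc l r := Set.Icc_subset_Icc le_rfl ht.2 hs1
      exact hne s hsmem i j hij (sub_eq_zero.1 hs2)
    · right
      intro t ht
      by_contra hcon
      push_neg at hcon
      have hgt : b i t - b j t < 0 := by
        have : b i t ≠ b j t := hne t ht i j hij
        cases lt_or_gt_of_ne this with
        | inl hh => linarith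
        | inr hh => linarith
      obtain ⟨s, hs1, hs2⟩ := intermediate_value_Icc' ht.1
        (hg.mono (Set.Icc_subset_Icc le_rfl ht.2)) ⟨hgt.le, h.le⟩
      have hsmem : s ∈ Set.Icc l r := Set.Icc_subset_Icc le_rfl ht.2 hs1
      exact hne s hsmem i j hij (sub_eq_zero.1 hs2)
  -- comparison when b i < b j pointwise
  have pair0 : ∀ i j : Fin n, i ≠ j → (∀ t ∈ Set.Icc l r, b i t < b j t) →
      (x j < x i ∧ x' j < x' i) ∨ (x i < x j ∧ x' i < x' j) := by
    intro i j hij hlt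
    have hfi : ContinuousOn (fun t => b i t - a t) (Set.Icc l r) := (hb i).sub ha
    have hfj : ContinuousOn (fun t => b j t - a t) (Set.Icc l r) := (hb j).sub ha
    have hfi' : ContinuousOn (fun t => b i t - a' t) (Set.Icc l r) := (hb i).sub ha'
    have hfj' : ContinuousOn (fun t => b j t - a' t) (Set.Icc l r) := (hb j).sub ha'
    have hll := hlt l hl
    have hlr2 := hlt r hr
    rcases htype i with ⟨p1, q1, p2, q2⟩ | ⟨p1, q1, p2, q2⟩
    · -- i is "down"; then j is also "down" (else contradiction at l)
      rcases htype j with ⟨s1, t1, s2, t2⟩ | ⟨s1, t1, s2, t2⟩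
      · -- both down : x i < x j and x' i < x' j
        right
        constructor
        · apply aux_lt_of_pos (fun t => b j t - a t) hfj (hz j) t1 (hxm i)
          have := hlt (x i) (hxm i)
          have := hbza i
          show 0 < b j (x i) - a (x i)
          linarith
        · apply aux_lt_of_pos (fun t => b j t - a' t) hfj' (hz' j) t2 (hxm' i)
          have := hlt (x' i) (hxm' i)
          have := hbza' i
          show 0 < b j (x' i) - a' (x' i)
          linarith
      · -- i down, j up : contradiction at l
        exfalso; nlinarith
    · -- i is "up"; then j is also "up" (else contradiction at r)
      rcases htype j with ⟨s1, t1, s2, t2⟩ | ⟨s1, t1, s2, t2⟩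
      · -- i up, j down : contradiction at r
        exfalso; nlinarith
      · -- both up : x j < x i and x' j < x' i
        left
        constructor
        · apply aux_lt_of_neg (fun t => b i t - a t) hfi (hz i) q1 (hxm j)
          have := hlt (x j) (hxm j)
          have := hbza j
          show b i (x j) - a (x j) < 0
          linarith
        · apply aux_lt_of_neg (fun t => b i t - a' t) hfi' (hz' i) q2 (hxm' j)
          have := hlt (x' j) (hxm' j)
          have := hbza' j
          show b i (x' j) - a' (x' j) < 0
          linarith
  have pair : ∀ i j : Fin n, i ≠ j →
      (x j < x i ∧ x' j < x' i) ∨ (x i < x j ∧ x' i < x' j) := by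
    intro i j hij
    rcases horder i j hij with h | h
    · exact pair0 i j hij h
    · rcases pair0 j i hij.symm h with ⟨h1, h2⟩ | ⟨h1, h2⟩
      · exact Or.inr ⟨h1, h2⟩
      · exact Or.inl ⟨h1, h2⟩
  intro i
  constructor
  · intro h j
    by_cases hj : j = i
    · subst hj; exact le_rfl
    · rcases pair i j (fun hh => hj hh.symm) with ⟨h1, _⟩ | ⟨_, h2⟩
      · exact absurd (h j) (not_le.2 h1)
      · exact h2.le
  · intro h j
    by_cases hj : j = i
    · subst hj; exact le_rfl
    · rcases pair i j (fun hh => hj hh.symm) with ⟨_, h1⟩ | ⟨h2, _⟩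
      · exact absurd (h j) (not_le.2 h1)
      · exact h2.le
end

section
/- Let r be an integer, let m ≥ 1, and let l_1, …, l_m and u_1, …, u_m be integers with l_i ≤ r ≤ u_i for every i. For 1 ≤ i ≤ m set min_i = min{l_1, …, l_i} and max_i = max{u_1, …, u_i}. Define the family of integer intervals: K_1 = Icc(l_1, u_1), and for 2 ≤ i ≤ m, K_i⁻ = Icc(l_i, min_{i−1} − 1) and K_i⁺ = Icc(max_{i−1} + 1, u_i). Then all sets in this family are pairwise disjoint. -/
/-- Prefix minimum `pmin l i = min {l 0, …, l i}`. -/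
def pmin (l : ℕ → ℤ) : ℕ → ℤ
  | 0 => l 0
  | i + 1 => min (pmin l i) (l (i + 1))

/-- Prefix maximum `pmax u i = max {u 0, …, u i}`. -/
def pmax (u : ℕ → ℤ) : ℕ → ℤ
  | 0 => u 0
  | i + 1 => max (pmax u i) (u (i + 1))

/-- The split family of intervals (0-indexed): `splitFam l u 0 false` is the
first interval `Icc (l 0) (u 0)` (and `splitFam l u 0 true = ∅`); for `i ≥ 1`,
`splitFam l u i false = Icc (l i) (minᵢ₋₁ − 1)` and
`splitFam l u i true = Icc (maxᵢ₋₁ + 1) (u i)`. -/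
def splitFam (l u : ℕ → ℤ) (i : ℕ) (s : Bool) : Set ℤ :=
  if i = 0 then (if s then (∅ : Set ℤ) else Set.Icc (l 0) (u 0))
  else if s then Set.Icc (pmax u (i - 1) + 1) (u i)
  else Set.Icc (l i) (pmin l (i - 1) - 1)

lemma pmin_le (l : ℕ → ℤ) : ∀ i k, k ≤ i → pmin l i ≤ l k := by
  intro i
  induction i with
  | zero =>
    intro k hk
    obtain rfl := Nat.le_zero.mp hk
    simp [pmin]
  | succ n ih =>
    intro k hk
    rcases Nat.eq_or_lt_of_le hk with rfl | hlt
    · simpa [pmin] using min_le_right (pmin l n) (l (n + 1))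
    · exact le_trans (by simpa [pmin] using min_le_left (pmin l n) (l (n + 1)))
        (ih k (Nat.lt_succ_iff.mp hlt))

lemma le_pmax (u : ℕ → ℤ) : ∀ i k, k ≤ i → u k ≤ pmax u i := by
  intro i
  induction i with
  | zero =>
    intro k hk
    obtain rfl := Nat.le_zero.mp hk
    simp [pmax]
  | succ n ih =>
    intro k hk
    rcases Nat.eq_or_lt_of_le hk with rfl | hlt
    · simpa [pmax] using le_max_right (pmax u n) (u (n + 1))
    · exact le_trans (ih k (Nat.lt_succ_iff.mp hlt))
        (by simpa [pmax] using le_max_left (pmax u n) (u (n + 1)))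

lemma disj_ft (r : ℤ) (m : ℕ) (hm : 1 ≤ m) (l u : ℕ → ℤ)
    (h : ∀ i, i < m → l i ≤ r ∧ r ≤ u i) (i j : ℕ) (hi : i < m) (hj : j < m) :
    Disjoint (splitFam l u i false) (splitFam l u j true) := by
  rcases Nat.eq_zero_or_pos j with rfl | hj1
  · simp [splitFam]
  have hj0 : j ≠ 0 := by omega
  rw [Set.disjoint_left]
  intro x hx hx'
  have hx' : pmax u (j - 1) + 1 ≤ x ∧ x ≤ u j := by simpa [splitFam, hj0] using hx'
  have hu0 : u 0 ≤ pmax u (j - 1) := le_pmax u (j - 1) 0 (Nat.zero_le _)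
  have h0 := h 0 (by omega)
  rcases Nat.eq_zero_or_pos i with rfl | hi1
  · have hx : l 0 ≤ x ∧ x ≤ u 0 := by simpa [splitFam] using hx
    linarith [hx.2, hx'.1]
  · have hi0 : i ≠ 0 := by omega
    have hx : l i ≤ x ∧ x ≤ pmin l (i - 1) - 1 := by simpa [splitFam, hi0] using hx
    have hl0 : pmin l (i - 1) ≤ l 0 := pmin_le l (i - 1) 0 (Nat.zero_le _)
    linarith [hx.2, hx'.1]

lemma disj_ff (l u : ℕ → ℤ) (i j : ℕ) (hij : i < j) :
    Disjoint (splitFam l u i false) (splitFam l u j false) := by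
  have hj0 : j ≠ 0 := by omega
  rw [Set.disjoint_left]
  intro x hx hx'
  have hx' : l j ≤ x ∧ x ≤ pmin l (j - 1) - 1 := by simpa [splitFam, hj0] using hx'
  have hli : pmin l (j - 1) ≤ l i := pmin_le l (j - 1) i (by omega)
  have hxl : l i ≤ x := by
    rcases Nat.eq_zero_or_pos i with rfl | hi1
    · exact (show l 0 ≤ x ∧ x ≤ u 0 from by simpa [splitFam] using hx).1
    · have hi0 : i ≠ 0 := by omega
      exact (show l i ≤ x ∧ x ≤ pmin l (i - 1) - 1 from by
        simpa [splitFam, hi0] using hx).1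
  linarith [hx'.2]

lemma disj_tt (l u : ℕ → ℤ) (i j : ℕ) (hij : i < j) :
    Disjoint (splitFam l u i true) (splitFam l u j true) := by
  rcases Nat.eq_zero_or_pos i with rfl | hi1
  · simp [splitFam]
  have hi0 : i ≠ 0 := by omega
  have hj0 : j ≠ 0 := by omega
  rw [Set.disjoint_left]
  intro x hx hx'
  have hx : pmax u (i - 1) + 1 ≤ x ∧ x ≤ u i := by simpa [splitFam, hi0] using hx
  have hx' : pmax u (j - 1) + 1 ≤ x ∧ x ≤ u j := by simpa [splitFam, hj0] using hx'
  have hui : u i ≤ pmax u (j - 1) := le_pmax u (j - 1) i (by omega)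
  linarith [hx.2, hx'.1]

/-- If all intervals `Icc (l i) (u i)`, `i < m`, contain a common reference
value `r`, then after the splitting of Step 3.3 all the resulting intervals
are pairwise disjoint. -/
theorem splitFam_pairwise_disjoint
    (r : ℤ) (m : ℕ) (hm : 1 ≤ m) (l u : ℕ → ℤ)
    (h : ∀ i, i < m → l i ≤ r ∧ r ≤ u i) :
    ∀ i j : ℕ, i < m → j < m → ∀ s t : Bool, (i, s) ≠ (j, t) →
      Disjoint (splitFam l u i s) (splitFam l u j t) := by
  intro i j hi hj s t hne
  rcases lt_trichotomy i j with hij | rfl | hij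
  · cases s <;> cases t
    · exact disj_ff l u i j hij
    · exact disj_ft r m hm l u h i j hi hj
    · exact (disj_ft r m hm l u h j i hj hi).symm
    · exact disj_tt l u i j hij
  · have hst : s ≠ t := fun hst => hne (by rw [hst])
    cases s <;> cases t
    · exact absurd rfl hst
    · exact disj_ft r m hm l u h i i hi hi
    · exact (disj_ft r m hm l u h i i hi hi).symm
    · exact absurd rfl hst
  · cases s <;> cases t
    · exact (disj_ff l u j i hij).symm
    · exact disj_ft r m hm l u h i j hi hj
    · exact (disj_ft r m hm l u h j i hj hi).symm
    · exact (disj_tt l u j i hij).symm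
end

section
/- Let k be a natural number and let a ≤ b ≤ 2^k be natural numbers. For a level 0 ≤ j < k and an index m < 2^{k−j}, the node interval is N(j, m) = Ico(m·2^j, (m+1)·2^j) and its parent interval is N(j+1, ⌊m/2⌋) = Ico(⌊m/2⌋·2^{j+1}, (⌊m/2⌋+1)·2^{j+1}). Then for every level j < k, the number of indices m < 2^{k−j} such that N(j, m) ⊆ Ico(a, b) but N(j+1, ⌊m/2⌋) ⊄ Ico(a, b) is at most 2. (Every segment is contained in the cover-lists of at most two nodes of each level of the segment tree.) -/
/-- The dyadic interval of the segment-tree node at level `j` and position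
`m`: `N(j, m) = Ico (m·2^j) ((m+1)·2^j)`. -/
def nodeInt (j m : ℕ) : Set ℕ := Set.Ico (m * 2 ^ j) ((m + 1) * 2 ^ j)

/-- A segment spanning `Ico a b` covers at most two nodes on each level of a
segment tree over `2^k` elementary intervals: for every level `j < k`, at most
two indices `m < 2^(k−j)` satisfy `N(j, m) ⊆ Ico a b` while the parent
interval `N(j+1, ⌊m/2⌋)` is not contained in `Ico a b`. -/
theorem cover_nodes_per_level_le_two
    (k a b : ℕ) (hab : a ≤ b) (hb : b ≤ 2 ^ k) :
    ∀ j, j < k →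
      {m : ℕ | m < 2 ^ (k - j) ∧ nodeInt j m ⊆ Set.Ico a b ∧
        ¬ nodeInt (j + 1) (m / 2) ⊆ Set.Ico a b}.ncard ≤ 2 := by
  intro j hj
  obtain ⟨p, hp⟩ : ∃ p, 2 ^ j = p := ⟨_, rfl⟩
  have hp0 : 0 < p := hp ▸ Nat.two_pow_pos j
  have hpow : (2:ℕ) ^ (j+1) = 2 * p := by rw [pow_succ, hp]; ring
  have hsub : {m : ℕ | m < 2 ^ (k - j) ∧ nodeInt j m ⊆ Set.Ico a b ∧
        ¬ nodeInt (j + 1) (m / 2) ⊆ Set.Ico a b} ⊆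
      {(a + p - 1) / p, b / p - 1} := by
    intro m hm
    obtain ⟨h1, h2, h3⟩ := hm
    rw [nodeInt, hp, Set.Ico_subset_Ico_iff (by nlinarith)] at h2
    obtain ⟨h2a, h2b⟩ := h2
    rw [nodeInt, hpow, Set.Ico_subset_Ico_iff (by nlinarith), not_and_or,
      not_le, not_le] at h3
    rcases Nat.even_or_odd m with ⟨t, ht⟩ | ⟨t, ht⟩
    · -- m = 2t, even: must be b / p - 1
      subst ht
      have hdiv : (t + t) / 2 = t := by omega
      rw [hdiv] at h3
      rcases h3 with h3 | h3
      · exfalso; nlinarith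
      · right
        have hle : t + t + 1 ≤ b / p := (Nat.le_div_iff_mul_le hp0).2 (by nlinarith)
        have hlt : b / p < t + t + 2 := (Nat.div_lt_iff_lt_mul hp0).2 (by nlinarith)
        simp only [Set.mem_singleton_iff]
        omega
    · -- m = 2t+1, odd: must be (a + p - 1) / p
      subst ht
      have hdiv : (2 * t + 1) / 2 = t := by omega
      rw [hdiv] at h3
      rcases h3 with h3 | h3
      swap
      · exfalso; nlinarith
      left
      have ha1 : 1 ≤ a := Nat.lt_of_le_of_lt (Nat.zero_le _) h3
      have hcancel : a + p - 1 + 1 = a + p := Nat.sub_add_cancel (by omega)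
      have hle : 2 * t + 1 ≤ (a + p - 1) / p :=
        (Nat.le_div_iff_mul_le hp0).2 (by nlinarith)
      have hlt : (a + p - 1) / p < 2 * t + 2 :=
        (Nat.div_lt_iff_lt_mul hp0).2 (by nlinarith)
      omega
  calc _ ≤ ({(a + p - 1) / p, b / p - 1} : Set ℕ).ncard :=
        Set.ncard_le_ncard hsub ((Set.finite_singleton _).insert _)
    _ ≤ ({b / p - 1} : Set ℕ).ncard + 1 := Set.ncard_insert_le _ _
    _ ≤ 2 := by rw [Set.ncard_singleton]
end

section
/- Let k be a natural number and let a < b ≤ 2^k be natural numbers, and let x ∈ Ico(a, b). Then there exist a level j ≤ k and an index m < 2^{k−j} such that x ∈ N(j, m), N(j, m) ⊆ Ico(a, b), and either j = k or N(j+1, ⌊m/2⌋) ⊄ Ico(a, b), where N(j, m) = Ico(m·2^j, (m+1)·2^j). (On the path in the segment tree from the leaf containing x to the root, there is exactly one node at which a segment spanning Ico(a,b) appears in the cover-list; in particular such a cover node containing x exists.) -/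
lemma mem_nodeInt_div (j x : ℕ) : x ∈ nodeInt j (x / 2 ^ j) := by
  have hp : 0 < 2 ^ j := Nat.pow_pos (by norm_num)
  constructor
  · exact Nat.div_mul_le_self x (2 ^ j)
  · exact (Nat.div_lt_iff_lt_mul hp).mp (Nat.lt_succ_self _)

/-- On the leaf-to-root path of any point `x` of a segment `Ico a b` there is
a node covered by the segment: a dyadic node interval `N(j, m)` containing `x`
with `N(j, m) ⊆ Ico a b`, such that either `j = k` (the node is the root) or
the parent interval `N(j+1, ⌊m/2⌋)` is not contained in `Ico a b`. -/
theorem cover_node_exists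
    (k a b x : ℕ) (hab : a < b) (hb : b ≤ 2 ^ k) (hx : x ∈ Set.Ico a b) :
    ∃ j ≤ k, ∃ m < 2 ^ (k - j), x ∈ nodeInt j m ∧ nodeInt j m ⊆ Set.Ico a b ∧
      (j = k ∨ ¬ nodeInt (j + 1) (m / 2) ⊆ Set.Ico a b) := by
  classical
  set Q : ℕ → Prop := fun j => nodeInt j (x / 2 ^ j) ⊆ Set.Ico a b with hQ
  have hQ0 : Q 0 := by
    intro y hy
    simp only [nodeInt, pow_zero, mul_one, Nat.div_one] at hy
    obtain ⟨h1, h2⟩ := hy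
    have : y = x := by omega
    exact this ▸ hx
  set j := Nat.findGreatest Q k with hj
  have hjk : j ≤ k := Nat.findGreatest_le k
  have hQj : Q j := Nat.findGreatest_spec (Nat.zero_le k) hQ0
  refine ⟨j, hjk, x / 2 ^ j, ?_, mem_nodeInt_div j x, hQj, ?_⟩
  · have hx2 : x < 2 ^ k := lt_of_lt_of_le hx.2 hb
    have hp : 0 < 2 ^ j := Nat.pow_pos (by norm_num)
    rw [Nat.div_lt_iff_lt_mul hp, ← pow_add]
    rwa [Nat.sub_add_cancel hjk]
  · rcases eq_or_lt_of_le hjk with h | h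
    · exact Or.inl h
    · right
      have := Nat.findGreatest_is_greatest (lt_of_le_of_lt (le_refl j) (Nat.lt_succ_self j)) h
      rw [Nat.div_div_eq_div_mul, ← pow_succ]
      exact this
end

section
/- Let k be a natural number and let I₁ = Ico(a₁, b₁) and I₂ = Ico(a₂, b₂) be nonempty intervals of natural numbers with b₁ ≤ 2^k and b₂ ≤ 2^k, and let x ∈ I₁ ∩ I₂. For j ≤ k and m < 2^{k−j} set N(j, m) = Ico(m·2^j, (m+1)·2^j); say (j, m) is a cover node of an interval I if N(j, m) ⊆ I and (j = k or N(j+1, ⌊m/2⌋) ⊄ I), and say (j, m) is an end node of I = Ico(a, b) if a ∈ N(j, m) or b−1 ∈ N(j, m). Then there exist j ≤ k and m < 2^{k−j} with x ∈ N(j, m) such that either (j, m) is a cover node of both I₁ and I₂, or (j, m) is a cover node of one of I₁, I₂ and an end node of the other. -/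
/-- `(j, m)` is a cover node of the interval `I` (in a segment tree over `2^k`
elementary cells) if its node interval is contained in `I` but the parent's
interval is not (unless the node is the root, `j = k`). -/
def IsCoverNode (k : ℕ) (I : Set ℕ) (j m : ℕ) : Prop :=
  nodeInt j m ⊆ I ∧ (j = k ∨ ¬ nodeInt (j + 1) (m / 2) ⊆ I)

/-- `(j, m)` is an end node of the interval `Ico a b` if one of the endpoints
of the interval lies in its node interval. -/
def IsEndNode (a b j m : ℕ) : Prop :=
  a ∈ nodeInt j m ∨ b - 1 ∈ nodeInt j m

lemma mem_nodeInt_iff {y j m : ℕ} : y ∈ nodeInt j m ↔ y / 2 ^ j = m := by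
  rw [nodeInt, Set.mem_Ico]
  constructor
  · rintro ⟨h1, h2⟩
    exact Nat.div_eq_of_lt_le h1 h2
  · rintro rfl
    refine ⟨Nat.div_mul_le_self _ _, ?_⟩
    calc y < 2 ^ j * (y / 2 ^ j) + 2 ^ j := by
            have h := Nat.div_add_mod y (2 ^ j)
            have h2 : y % 2 ^ j < 2 ^ j := Nat.mod_lt _ (by positivity)
            omega
      _ = (y / 2 ^ j + 1) * 2 ^ j := by ring

lemma self_mem_nodeInt (x j : ℕ) : x ∈ nodeInt j (x / 2 ^ j) := mem_nodeInt_iff.mpr rfl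

lemma nodeInt_chain_mono (x : ℕ) {i j : ℕ} (h : i ≤ j) :
    nodeInt i (x / 2 ^ i) ⊆ nodeInt j (x / 2 ^ j) := by
  intro y hy
  rw [mem_nodeInt_iff] at hy ⊢
  have h2 : (2:ℕ) ^ j = 2 ^ i * 2 ^ (j - i) := by rw [← pow_add]; congr 1; omega
  rw [h2, ← Nat.div_div_eq_div_mul, ← Nat.div_div_eq_div_mul, hy]

/-- A node interval meeting `Ico a b` but not contained in it contains an
endpoint of `Ico a b`. -/
lemma isEndNode_of_not_subset {a b x j m : ℕ} (hab : a < b)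
    (hxm : x ∈ nodeInt j m) (hxI : x ∈ Set.Ico a b)
    (hns : ¬ nodeInt j m ⊆ Set.Ico a b) : IsEndNode a b j m := by
  rw [Set.not_subset] at hns
  obtain ⟨z, hz, hzI⟩ := hns
  rw [nodeInt, Set.mem_Ico] at hxm hz
  rw [Set.mem_Ico] at hxI hzI
  rw [IsEndNode, nodeInt, Set.mem_Ico, Set.mem_Ico]
  omega

open Classical in
/-- Chazelle's lemma: if a point `x` lies in two nonempty intervals
`I₁ = Ico a₁ b₁` and `I₂ = Ico a₂ b₂`, then some segment-tree node whose
dyadic interval contains `x` is either a cover node of both intervals, or a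
cover node of one and an end node of the other. -/
theorem chazelle_cover_or_end
    (k a₁ b₁ a₂ b₂ x : ℕ) (h₁ : a₁ < b₁) (h₂ : a₂ < b₂)
    (hb₁ : b₁ ≤ 2 ^ k) (hb₂ : b₂ ≤ 2 ^ k)
    (hx : x ∈ Set.Ico a₁ b₁ ∩ Set.Ico a₂ b₂) :
    ∃ j ≤ k, ∃ m < 2 ^ (k - j), x ∈ nodeInt j m ∧
      ((IsCoverNode k (Set.Ico a₁ b₁) j m ∧ IsCoverNode k (Set.Ico a₂ b₂) j m) ∨
       (IsCoverNode k (Set.Ico a₁ b₁) j m ∧ IsEndNode a₂ b₂ j m) ∨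
       (IsCoverNode k (Set.Ico a₂ b₂) j m ∧ IsEndNode a₁ b₁ j m)) := by
  obtain ⟨hx₁, hx₂⟩ := hx
  -- the predicate "node at level j on the chain of x is contained in I"
  set P₁ : ℕ → Prop := fun j => nodeInt j (x / 2 ^ j) ⊆ Set.Ico a₁ b₁ with hP₁
  set P₂ : ℕ → Prop := fun j => nodeInt j (x / 2 ^ j) ⊆ Set.Ico a₂ b₂ with hP₂
  have hP₁0 : P₁ 0 := by
    intro y hy
    rw [mem_nodeInt_iff, pow_zero, Nat.div_one] at hy
    simpa [hy] using hx₁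
  have hP₂0 : P₂ 0 := by
    intro y hy
    rw [mem_nodeInt_iff, pow_zero, Nat.div_one] at hy
    simpa [hy] using hx₂
  set j₁ := Nat.findGreatest P₁ k with hj₁
  set j₂ := Nat.findGreatest P₂ k with hj₂
  have hj₁k : j₁ ≤ k := Nat.findGreatest_le k
  have hj₂k : j₂ ≤ k := Nat.findGreatest_le k
  have hP₁j : P₁ j₁ := Nat.findGreatest_spec (Nat.zero_le k) hP₁0
  have hP₂j : P₂ j₂ := Nat.findGreatest_spec (Nat.zero_le k) hP₂0
  have hgt₁ : ∀ n, j₁ < n → n ≤ k → ¬ P₁ n := fun n h h' =>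
    Nat.findGreatest_is_greatest h h'
  have hgt₂ : ∀ n, j₂ < n → n ≤ k → ¬ P₂ n := fun n h h' =>
    Nat.findGreatest_is_greatest h h'
  have hxlt : x < 2 ^ k := lt_of_lt_of_le hx₁.2 hb₁
  have hmlt : ∀ j ≤ k, x / 2 ^ j < 2 ^ (k - j) := by
    intro j hj
    rw [Nat.div_lt_iff_lt_mul (by positivity), ← pow_add]
    rwa [Nat.sub_add_cancel hj]
  have hpar : ∀ j : ℕ, (x / 2 ^ j) / 2 = x / 2 ^ (j + 1) := by
    intro j
    rw [Nat.div_div_eq_div_mul, pow_succ]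
  have hcov₁ : IsCoverNode k (Set.Ico a₁ b₁) j₁ (x / 2 ^ j₁) := by
    refine ⟨hP₁j, ?_⟩
    rcases eq_or_lt_of_le hj₁k with h | h
    · exact Or.inl h
    · exact Or.inr (by rw [hpar]; exact hgt₁ (j₁ + 1) (Nat.lt_succ_self _) h)
  have hcov₂ : IsCoverNode k (Set.Ico a₂ b₂) j₂ (x / 2 ^ j₂) := by
    refine ⟨hP₂j, ?_⟩
    rcases eq_or_lt_of_le hj₂k with h | h
    · exact Or.inl h
    · exact Or.inr (by rw [hpar]; exact hgt₂ (j₂ + 1) (Nat.lt_succ_self _) h)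
  rcases lt_trichotomy j₁ j₂ with hlt | heq | hlt
  · -- use the cover node of I₂; it is an end node of I₁
    refine ⟨j₂, hj₂k, x / 2 ^ j₂, hmlt j₂ hj₂k, self_mem_nodeInt x j₂, ?_⟩
    have hend : IsEndNode a₁ b₁ j₂ (x / 2 ^ j₂) :=
      isEndNode_of_not_subset h₁ (self_mem_nodeInt x j₂) hx₁ (hgt₁ j₂ hlt hj₂k)
    exact Or.inr (Or.inr ⟨hcov₂, hend⟩)
  · exact ⟨j₁, hj₁k, x / 2 ^ j₁, hmlt j₁ hj₁k, self_mem_nodeInt x j₁,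
      Or.inl ⟨hcov₁, heq ▸ hcov₂⟩⟩
  · refine ⟨j₁, hj₁k, x / 2 ^ j₁, hmlt j₁ hj₁k, self_mem_nodeInt x j₁, ?_⟩
    have hend : IsEndNode a₂ b₂ j₁ (x / 2 ^ j₁) :=
      isEndNode_of_not_subset h₂ (self_mem_nodeInt x j₁) hx₂ (hgt₂ j₁ hlt hj₁k)
    exact Or.inr (Or.inl ⟨hcov₁, hend⟩)
end
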